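/- Let G be a finite simple graph, let m be a vertex, and let u and v be two distinct neighbors of m (G.Adj m u and G.Adj m v with u ≠ v). Then there exists a cycle in G whose support contains u, m, and v if and only if there is a walk from u to v in G whose support does not contain m. -/

import Mathlib

/-!
Rotating a cycle through `m` to start at `m` leaves, after its first edge, a path ending at `m`;
the initial segments of that path up to `u` and up to `v` avoid `m`, and together they join `u`
to `v`. Conversely, a path from `u` to `v` avoiding `m` closes up with the edges `m u` and `v m`
into a cycle, which is not degenerate since `u ≠ v`.
-/

namespace SimpleGraph.Walk

variable {V : Type*} {G : SimpleGraph V}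

lemma IsPath.exists_walk_notMem_support {a b x y : V} {p : G.Walk a b} (hp : p.IsPath)
    (hx : x ∈ p.support) (hy : y ∈ p.support) (hxb : x ≠ b) (hyb : y ≠ b) :
    ∃ q : G.Walk x y, b ∉ q.support := by
  classical
  refine ⟨(p.takeUntil x hx).reverse.append (p.takeUntil y hy), fun hb => ?_⟩
  rw [mem_support_append_iff, support_reverse, List.mem_reverse] at hb
  exact hb.elim (endpoint_notMem_support_takeUntil hp hx hxb.symm)
    (endpoint_notMem_support_takeUntil hp hy hyb.symm)

lemma IsCycle.exists_walk_notMem_support {x m u v : V} {c : G.Walk x x} (hc : c.IsCycle)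
    (hm : m ∈ c.support) (hu : u ∈ c.support) (hv : v ∈ c.support) (hum : u ≠ m)
    (hvm : v ≠ m) : ∃ q : G.Walk u v, m ∉ q.support := by
  classical
  set c' := c.rotate m hm
  have mem_tail : ∀ w ∈ c.support, w ≠ m → w ∈ c'.tail.support := by
    intro w hw hwm
    rw [support_tail_of_not_nil c' (hc.rotate hm).not_nil]
    have hw' : w ∈ c'.support := (c.mem_support_rotate_iff m hm).2 hw
    rw [← cons_tail_support] at hw'
    exact (List.mem_cons.1 hw').resolve_left hwm
  exact (hc.rotate hm).isPath_tail.exists_walk_notMem_support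
    (mem_tail u hu hum) (mem_tail v hv hvm) hum hvm

lemma IsPath.isCycle_cons_cons {m u v : V} {p : G.Walk u v} (hp : p.IsPath)
    (hmp : m ∉ p.support) (hu : G.Adj m u) (hv : G.Adj v m) (huv : u ≠ v) :
    (cons hv (cons hu p)).IsCycle := by
  rw [cons_isCycle_iff, edges_cons, List.mem_cons, not_or]
  refine ⟨hp.cons hmp, fun h => ?_, fun h => hmp (p.snd_mem_support_of_mem_edges h)⟩
  rcases Sym2.eq_iff.1 h with ⟨rfl, rfl⟩ | ⟨rfl, -⟩
  · exact hu.ne rfl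
  · exact huv rfl

end SimpleGraph.Walk

open SimpleGraph Walk

theorem stmt_5_general {V : Type*} (G : SimpleGraph V) {m u v : V}
    (hu : G.Adj m u) (hv : G.Adj m v) (huv : u ≠ v) :
    (∃ (x : V) (c : G.Walk x x), c.IsCycle ∧
        u ∈ c.support ∧ m ∈ c.support ∧ v ∈ c.support) ↔
      ∃ q : G.Walk u v, m ∉ q.support := by
  classical
  constructor
  · rintro ⟨x, c, hc, hus, hms, hvs⟩
    exact hc.exists_walk_notMem_support hms hus hvs hu.ne' hv.ne'
  · rintro ⟨q, hmq⟩
    have hmp : m ∉ q.bypass.support := fun h => hmq (q.support_bypass_subset_support h)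
    exact ⟨v, _, q.bypass_isPath.isCycle_cons_cons hmp hu hv.symm huv, by simp⟩

theorem stmt_5 {V : Type*} [Fintype V] (G : SimpleGraph V) {m u v : V}
    (hu : G.Adj m u) (hv : G.Adj m v) (huv : u ≠ v) :
    (∃ (x : V) (c : G.Walk x x), c.IsCycle ∧
        u ∈ c.support ∧ m ∈ c.support ∧ v ∈ c.support) ↔
      ∃ q : G.Walk u v, m ∉ q.support :=
  stmt_5_general G hu hv huv
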